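/- arXiv:1311.3912 — 5 statements merged into one kernel-verified Lean document; each statement's English description precedes it below -/
import Mathlib

section
/- A finite poset x is covariant (has a unique natural labeling up to label isomorphism) if and only if any two elements a, b of x with different heights are comparable. -/
/-- `ℓ` is a (natural) labeling of the causet `α`: a bijection onto `{1,…,|α|}`
(modeled as `Fin (card α)`) such that `a < b` implies `ℓ a < ℓ b`. -/
def IsLabeling {α : Type*} [PartialOrder α] [Fintype α]
    (ℓ : α ≃ Fin (Fintype.card α)) : Prop :=
  ∀ a b : α, a < b → ℓ a < ℓ b

/-- A causet is covariant if any two labelings are label isomorphic, i.e. there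
is an order automorphism carrying one labeling to the other. -/
def IsCovariant (α : Type*) [PartialOrder α] [Fintype α] : Prop :=
  ∀ ℓ₁ ℓ₂ : α ≃ Fin (Fintype.card α), IsLabeling ℓ₁ → IsLabeling ℓ₂ →
    ∃ φ : α ≃o α, ∀ a : α, ℓ₂ (φ a) = ℓ₁ a

open Order Finset

section Aux

variable {α : Type*} [PartialOrder α] [Fintype α]

/-- In a finite poset, the height of every element is finite. -/
lemma height_lt_top' (x : α) : Order.height x < ⊤ := by
  have h : Order.height x ≤ (Fintype.card α : ℕ∞) := by
    apply Order.height_le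
    intro p _
    exact_mod_cast (p.length_lt_card).le
  exact lt_of_le_of_lt h (WithTop.coe_lt_top _)

/-- From an injective map to a linear order that is strictly monotone on the
partial order, we get a labeling compatible with the map's order. -/
lemma exists_labeling_of_inj {β : Type*} [LinearOrder β] (f : α → β)
    (finj : Function.Injective f) :
    ∃ ℓ : α ≃ Fin (Fintype.card α), ∀ x y : α, ℓ x < ℓ y ↔ f x < f y := by
  classical
  set s : Finset β := Finset.univ.image f with hs
  have hcard : s.card = Fintype.card α := by
    rw [hs, Finset.card_image_of_injective _ finj, Finset.card_univ]
  let e := s.orderIsoOfFin hcard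
  have hbij : Function.Bijective (fun x : α => (⟨f x, by
      simp [hs, Finset.mem_image]⟩ : {y // y ∈ s})) := by
    constructor
    · intro x y hxy
      exact finj (congrArg Subtype.val hxy)
    · rintro ⟨y, hy⟩
      rw [hs, Finset.mem_image] at hy
      obtain ⟨x, -, rfl⟩ := hy
      exact ⟨x, rfl⟩
  let g : α ≃ {y // y ∈ s} := Equiv.ofBijective _ hbij
  refine ⟨g.trans e.symm.toEquiv, fun x y => ?_⟩
  show e.symm (g x) < e.symm (g y) ↔ f x < f y
  rw [e.symm.lt_iff_lt]
  exact Subtype.mk_lt_mk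

/-- If `a` and `b` are incomparable and `a` is below `b` in the fixed linear
extension, then there is a labeling `ℓ` such that `ℓ` precomposed with the
swap of `a` and `b` is also a labeling. -/
lemma exists_swap_labeling [DecidableEq α] {a b : α} (hab : ¬ a < b) (hba : ¬ b < a) (hne : a ≠ b)
    (hL : toLinearExtension (α := α) a < toLinearExtension b) :
    ∃ ℓ : α ≃ Fin (Fintype.card α), IsLabeling ℓ ∧
      IsLabeling ((Equiv.swap a b).trans ℓ) := by
  classical
  set L : α → LinearExtension α := fun x => toLinearExtension x with hLdef
  have Linj : Function.Injective L := fun x y h => h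
  have Lmono : ∀ x y : α, x < y → L x < L y := fun x y h =>
    lt_of_le_of_ne (toLinearExtension.monotone h.le) (fun e => h.ne (Linj e))
  set g : α → ℕ := fun x =>
    if x = a then 1 else if x = b then 2 else
      if L x < L b ∧ ¬ a < x then 0 else 3 with hg
  have gval0 : ∀ x : α, x ≠ a → x ≠ b → L x < L b → ¬ a < x → g x = 0 := by
    intro x h1 h2 h3 h4; simp [hg, h1, h2, h3, h4]
  have gval3 : ∀ x : α, x ≠ a → x ≠ b → ¬ (L x < L b ∧ ¬ a < x) → g x = 3 := by
    intro x h1 h2 h3; simp only [hg, if_neg h1, if_neg h2, if_neg h3]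
  have gvala : g a = 1 := by simp [hg]
  have gvalb : g b = 2 := by simp [hg, hne.symm]
  -- auxiliary facts
  have habove : ∀ y : α, a < y → g y = 3 := by
    intro y hay
    refine gval3 y (fun h => by subst h; exact lt_irrefl _ hay) (fun h => by subst h; exact hab hay) ?_
    rintro ⟨-, h⟩; exact h hay
  have habove' : ∀ y : α, b < y → g y = 3 := by
    intro y hby
    refine gval3 y (fun h => by subst h; exact hba hby) (fun h => by subst h; exact lt_irrefl _ hby) ?_
    rintro ⟨h, -⟩; exact absurd (Lmono _ _ hby) (not_lt_of_gt h)
  have hbelow : ∀ x : α, x < a → g x = 0 := by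
    intro x hxa
    refine gval0 x (fun h => by subst h; exact lt_irrefl _ hxa)
      (fun h => by subst h; exact hba hxa) (lt_trans (Lmono _ _ hxa) hL) ?_
    intro hax; exact lt_irrefl _ (lt_trans hax hxa)
  have hbelow' : ∀ x : α, x < b → g x = 0 := by
    intro x hxb
    refine gval0 x (fun h => by subst h; exact hab hxb)
      (fun h => by subst h; exact lt_irrefl _ hxb) (Lmono _ _ hxb) ?_
    intro hax; exact hab (lt_trans hax hxb)
  have gmono : ∀ x y : α, x < y → g x ≤ g y := by
    intro x y hxy
    by_cases hxa : x = a
    · subst hxa; rw [gvala, habove y hxy]; omega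
    by_cases hxb : x = b
    · subst hxb; rw [gvalb, habove' y hxy]; omega
    by_cases h0 : L x < L b ∧ ¬ a < x
    · rw [gval0 x hxa hxb h0.1 h0.2]; omega
    · -- g x = 3; show g y = 3
      rw [gval3 x hxa hxb h0]
      by_cases hya : y = a
      · subst hya; exact absurd (hbelow x hxy) (by rw [gval3 x hxa hxb h0]; omega)
      by_cases hyb : y = b
      · subst hyb; exact absurd (hbelow' x hxy) (by rw [gval3 x hxa hxb h0]; omega)
      · rw [gval3 y hya hyb ?_]
        rintro ⟨h1, h2⟩
        rcases not_and_or.mp h0 with h | h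
        · exact h (lt_trans (Lmono _ _ hxy) h1)
        · exact h2 (lt_trans (not_not.mp h) hxy)
  -- the key function into a linear order
  set f : α → ℕ ×ₗ LinearExtension α := fun x => toLex (g x, L x) with hf
  have finj : Function.Injective f := by
    intro x y h
    have : (g x, L x) = (g y, L y) := toLex.injective h
    exact Linj (congrArg Prod.snd this)
  have flt : ∀ x y : α, g x < g y → f x < f y := by
    intro x y h
    rw [hf, Prod.Lex.lt_iff]
    exact Or.inl h
  have fmono : ∀ x y : α, x < y → f x < f y := by
    intro x y hxy
    rcases lt_or_eq_of_le (gmono x y hxy) with h | h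
    · exact flt _ _ h
    · rw [hf, Prod.Lex.lt_iff]; exact Or.inr ⟨h, Lmono _ _ hxy⟩
  obtain ⟨ℓ, hℓ⟩ := exists_labeling_of_inj f finj
  refine ⟨ℓ, fun x y hxy => (hℓ x y).mpr (fmono x y hxy), ?_⟩
  intro x y hxy
  rw [Equiv.trans_apply, Equiv.trans_apply, hℓ]
  by_cases hxa : x = a
  · subst hxa
    have hyb : y ≠ b := fun h => hab (h ▸ hxy)
    have hya : y ≠ x := fun h => lt_irrefl _ (h ▸ hxy)
    rw [Equiv.swap_apply_left, Equiv.swap_apply_of_ne_of_ne hya hyb]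
    exact flt _ _ (by rw [gvalb, habove y hxy]; omega)
  by_cases hxb : x = b
  · subst hxb
    have hya : y ≠ a := fun h => hba (h ▸ hxy)
    have hyb : y ≠ x := fun h => lt_irrefl _ (h ▸ hxy)
    rw [Equiv.swap_apply_right, Equiv.swap_apply_of_ne_of_ne hya hyb]
    exact flt _ _ (by rw [gvala, habove' y hxy]; omega)
  by_cases hya : y = a
  · subst hya
    rw [Equiv.swap_apply_left, Equiv.swap_apply_of_ne_of_ne hxa hxb]
    exact flt _ _ (by rw [gvalb, hbelow x hxy]; omega)
  by_cases hyb : y = b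
  · subst hyb
    rw [Equiv.swap_apply_right, Equiv.swap_apply_of_ne_of_ne hxa hxb]
    exact flt _ _ (by rw [gvala, hbelow' x hxy]; omega)
  · rw [Equiv.swap_apply_of_ne_of_ne hxa hxb, Equiv.swap_apply_of_ne_of_ne hya hyb]
    exact fmono x y hxy

/-- Forward direction: in a covariant causet, elements with strictly smaller
height are comparable. -/
lemma comparable_of_covariant (hcov : IsCovariant α) {a b : α}
    (hh : Order.height a < Order.height b) : a < b ∨ b < a := by
  classical
  letI : DecidableEq α := Classical.decEq α
  by_contra hcon
  push_neg at hcon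
  obtain ⟨hab, hba⟩ := hcon
  have hne : a ≠ b := fun h => lt_irrefl _ (h ▸ hh)
  have hLne : toLinearExtension (α := α) a ≠ toLinearExtension b :=
    fun h => hne h
  -- obtain a labeling together with its swapped version
  have hswap : ∃ ℓ : α ≃ Fin (Fintype.card α), IsLabeling ℓ ∧
      IsLabeling ((Equiv.swap a b).trans ℓ) := by
    rcases hLne.lt_or_gt with h | h
    · exact exists_swap_labeling hab hba hne h
    · obtain ⟨ℓ, h1, h2⟩ := exists_swap_labeling hba hab hne.symm h
      exact ⟨ℓ, h1, by rwa [Equiv.swap_comm]⟩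
  obtain ⟨ℓ, hℓ, hℓ'⟩ := hswap
  obtain ⟨φ, hφ⟩ := hcov ℓ ((Equiv.swap a b).trans ℓ) hℓ hℓ'
  have hφswap : ∀ x : α, φ x = Equiv.swap a b x := by
    intro x
    have := hφ x
    have h2 : Equiv.swap a b (φ x) = x := ℓ.injective this
    have := congrArg (Equiv.swap a b) h2
    rwa [Equiv.swap_apply_self] at this
  -- find an element `c < b` with height at least `height a`
  have hne_top : Order.height a ≠ ⊤ := hh.ne_top
  obtain ⟨n, hn⟩ := WithTop.ne_top_iff_exists.mp hne_top
  have hn1 : ((n + 1 : ℕ) : ℕ∞) ≤ Order.height b := by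
    have : Order.height a + 1 ≤ Order.height b :=
      ENat.add_one_le_iff hne_top |>.mpr hh
    rw [← hn] at this
    exact_mod_cast this
  obtain ⟨p, hplast, hplen⟩ := Order.exists_series_of_le_height b hn1
  set c : α := p ⟨n, by omega⟩ with hc
  have hcb : c < b := by
    have h1 : (⟨n, by omega⟩ : Fin (p.length + 1)) < ⟨p.length, by omega⟩ := by
      rw [Fin.mk_lt_mk]; omega
    have := p.strictMono h1
    rwa [show p ⟨p.length, by omega⟩ = b from hplast] at this
  have hhc : (n : ℕ∞) ≤ Order.height c := by
    have := Order.index_le_height p ⟨n, by omega⟩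
    simpa using this
  have hca : ¬ c < a := by
    intro h
    have := Order.height_strictMono h (lt_of_le_of_lt (Order.height_mono h.le) (height_lt_top' a))
    rw [← hn] at this
    exact absurd (lt_of_le_of_lt hhc this) (lt_irrefl _)
  have hcnea : c ≠ a := fun h => hab (h ▸ hcb)
  have hcneb : c ≠ b := hcb.ne
  have := φ.lt_iff_lt.mpr hcb
  rw [hφswap c, hφswap b, Equiv.swap_apply_right,
    Equiv.swap_apply_of_ne_of_ne hcnea hcneb] at this
  exact hca this

end Aux

/-- A finite poset is covariant iff any two elements of different heights are
comparable. -/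
theorem covariant_iff_height_comparable (α : Type*) [PartialOrder α] [Fintype α] :
    IsCovariant α ↔
      ∀ a b : α, Order.height a ≠ Order.height b → (a < b ∨ b < a) := by
  constructor
  · intro hcov a b hne
    rcases hne.lt_or_gt with h | h
    · exact comparable_of_covariant hcov h
    · exact (comparable_of_covariant hcov h).symm
  · intro H ℓ₁ ℓ₂ h₁ h₂
    -- the order is determined by heights
    have key1 : ∀ x y : α, x < y → Order.height x < Order.height y := by
      intro x y h
      exact Order.height_strictMono h (lt_of_le_of_lt (Order.height_mono h.le) (height_lt_top' y))
    have key2 : ∀ x y : α, Order.height x < Order.height y → x < y := by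
      intro x y h
      rcases H x y h.ne with h' | h'
      · exact h'
      · exact absurd (key1 _ _ h') (not_lt_of_gt h)
    have hiff : ∀ x y : α, x < y ↔ Order.height x < Order.height y :=
      fun x y => ⟨key1 x y, key2 x y⟩
    -- labels sorted by height
    have labmono : ∀ ℓ : α ≃ Fin (Fintype.card α), IsLabeling ℓ →
        Monotone (fun i => Order.height (ℓ.symm i)) := by
      intro ℓ hℓ i j hij
      rcases lt_or_eq_of_le hij with h | h
      · by_contra hlt
        push_neg at hlt
        have := hℓ _ _ (key2 _ _ hlt)
        simp only [Equiv.apply_symm_apply] at this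
        exact absurd h (not_lt_of_gt this)
      · rw [h]
    -- the two height sequences agree
    have hseq : (fun i => Order.height (ℓ₁.symm i)) = fun i => Order.height (ℓ₂.symm i) := by
      have h1 := labmono ℓ₁ h₁
      have h2 := labmono ℓ₂ h₂
      set σ : Equiv.Perm (Fin (Fintype.card α)) := ℓ₂.symm.trans ℓ₁ with hσ
      have hcomp : (fun x => Order.height (ℓ₁.symm x)) ∘ σ = fun i => Order.height (ℓ₂.symm i) := by
        funext i
        simp [hσ]
      have := Tuple.unique_monotone (f := fun x => Order.height (ℓ₁.symm x))
        (σ := σ) (τ := 1) (by rw [hcomp]; exact h2) (by simpa using h1)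
      rw [← hcomp, this]
      funext i
      simp
    have hpres : ∀ x : α, Order.height (ℓ₂.symm (ℓ₁ x)) = Order.height x := by
      intro x
      have := congrFun hseq (ℓ₁ x)
      rw [← this, Equiv.symm_apply_apply]
    refine ⟨⟨ℓ₁.trans ℓ₂.symm, ?_⟩, fun x => ?_⟩
    · intro x y
      show ℓ₂.symm (ℓ₁ x) ≤ ℓ₂.symm (ℓ₁ y) ↔ x ≤ y
      constructor
      · intro h
        rcases lt_or_eq_of_le h with h' | h'
        · have := key2 _ _ ((hpres x) ▸ (hpres y) ▸ key1 _ _ h')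
          exact this.le
        · exact (ℓ₁.injective (ℓ₂.symm.injective h')).le
      · intro h
        rcases lt_or_eq_of_le h with h' | h'
        · exact (key2 _ _ ((hpres x).symm ▸ (hpres y).symm ▸ key1 _ _ h')).le
        · rw [h']
    · show ℓ₂ (ℓ₂.symm (ℓ₁ x)) = ℓ₁ x
      exact ℓ₂.apply_symm_apply _
end

section
/- Every covariant causet with more than one element has a unique producer: there is exactly one covariant causet y such that x is obtained from y by adjoining a single maximal element. -/
/-!
In a finite covariant causet, `x < y` holds exactly when `x` has smaller height than `y`, so the
order is determined by the height function. All maximal elements are pairwise incomparable, hence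
of equal height, so the transposition of two maximal elements preserves heights and is an order
automorphism. It carries the complement of one onto the complement of the other, which makes any
two producers isomorphic; deleting a maximal element does not change the heights of the remaining
elements, so the producer is again covariant.
-/

/-- A covariant causet: any two elements of different heights are comparable. -/
def CCauset (α : Type) [PartialOrder α] : Prop :=
  ∀ a b : α, Order.height a ≠ Order.height b → (a < b ∨ b < a)

/-- `β` produces `α` (equivalently, `α` is an offspring of `β`): `α` is obtained
from `β` by adjoining a single maximal element, i.e. `α` has a maximal element
whose deletion leaves a poset order isomorphic to `β`. -/
def Produces (β α : Type) [PartialOrder β] [PartialOrder α] : Prop :=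
  ∃ a : α, IsMax a ∧ Nonempty (β ≃o {c : α // c ≠ a})

open Order

lemma exists_isMax_of_finite {α : Type*} [Preorder α] [Finite α] [Nonempty α] :
    ∃ a : α, IsMax a := by
  obtain ⟨a, -, ha⟩ := Finite.exists_le_maximal (p := fun _ : α => True) (a := Classical.ofNonempty)
    trivial
  exact ⟨a, fun b hab => ha.2 trivial hab⟩

lemma height_lt_top_of_fintype {α : Type*} [Preorder α] [Fintype α] (x : α) : height x < ⊤ :=
  (height_le fun p _ => Nat.cast_le.mpr p.length_lt_card.le).trans_lt
    (ENat.natCast_lt_top (Fintype.card α))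

lemma height_subtype_ne_of_isMax {α : Type*} [Preorder α] {a : α} (ha : IsMax a)
    (c : {x : α // x ≠ a}) : height c = height (c : α) :=
  height_eq_of_strictMono Subtype.val (fun _ _ h => h)
    (fun _ b hb => ⟨⟨b, fun hba => ha.not_lt (hba ▸ hb)⟩, hb, rfl⟩) c

def OrderIso.subtypeNe {α β : Type*} [Preorder α] [Preorder β] (e : α ≃o β) {a : α} {b : β}
    (h : e a = b) : {x : α // x ≠ a} ≃o {y : β // y ≠ b} where
  toEquiv := e.toEquiv.subtypeEquiv fun x => by simp [← h]
  map_rel_iff' := e.le_iff_le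

namespace CCauset

variable {α : Type} [PartialOrder α]

lemma height_eq_of_isMax (hx : CCauset α) {a b : α} (ha : IsMax a) (hb : IsMax b) :
    height a = height b := by
  by_contra h
  rcases hx a b h with hab | hba
  · exact ha.not_lt hab
  · exact hb.not_lt hba

lemma subtype_ne_of_isMax (hx : CCauset α) {a : α} (ha : IsMax a) :
    CCauset {x : α // x ≠ a} := by
  intro c d h
  rw [height_subtype_ne_of_isMax ha, height_subtype_ne_of_isMax ha] at h
  exact hx c d h

lemma height_swap_of_isMax [DecidableEq α] (hx : CCauset α) {a b : α} (ha : IsMax a)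
    (hb : IsMax b) (x : α) : height (Equiv.swap a b x) = height x := by
  rw [Equiv.swap_apply_def]
  split_ifs with hxa hxb
  · rw [hxa, hx.height_eq_of_isMax ha hb]
  · rw [hxb, hx.height_eq_of_isMax ha hb]
  · rfl

variable [Fintype α]

lemma lt_iff_height_lt (hx : CCauset α) {x y : α} : x < y ↔ height x < height y := by
  refine ⟨fun h => height_strictMono h (height_lt_top_of_fintype x), fun h => ?_⟩
  exact (hx x y h.ne).resolve_right
    fun hyx => (height_strictMono hyx (height_lt_top_of_fintype y)).not_gt h

lemma le_iff_eq_or_height_lt (hx : CCauset α) {x y : α} :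
    x ≤ y ↔ x = y ∨ height x < height y := by
  rw [le_iff_eq_or_lt, hx.lt_iff_height_lt]

noncomputable def orderIsoOfHeight (hx : CCauset α) (e : α ≃ α)
    (he : ∀ x, height (e x) = height x) : α ≃o α where
  toEquiv := e
  map_rel_iff' {x y} := by
    simp only [hx.le_iff_eq_or_height_lt, he, e.injective.eq_iff]

noncomputable def orderIsoSubtypeNeOfIsMax (hx : CCauset α) {a b : α} (ha : IsMax a)
    (hb : IsMax b) : {x : α // x ≠ a} ≃o {x : α // x ≠ b} := by
  classical
  exact (hx.orderIsoOfHeight (Equiv.swap a b) (hx.height_swap_of_isMax ha hb)).subtypeNe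
    (Equiv.swap_apply_left a b)

end CCauset

/-- Every covariant causet with more than one element has a unique producer:
there exists a covariant causet producing it, and any two covariant producers
are order isomorphic. -/
theorem unique_producer (α : Type) [PartialOrder α] [Fintype α]
    (hx : CCauset α) (h1 : 1 < Fintype.card α) :
    (∃ (β : Type) (i1 : PartialOrder β) (i2 : Fintype β),
        @CCauset β i1 ∧ @Produces β α i1 _) ∧
    (∀ (β γ : Type) (i1 : PartialOrder β) (i3 : PartialOrder γ),
        @CCauset β i1 → @CCauset γ i3 → @Produces β α i1 _ → @Produces γ α i3 _ →
          ∃ e : β ≃ γ, ∀ a b : β, i1.le a b ↔ i3.le (e a) (e b)) := by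
  refine ⟨?_, ?_⟩
  · have : Nonempty α := Fintype.card_pos_iff.mp (by omega)
    obtain ⟨a, ha⟩ := exists_isMax_of_finite (α := α)
    exact ⟨{x : α // x ≠ a}, inferInstance, Fintype.ofFinite _, hx.subtype_ne_of_isMax ha,
      a, ha, ⟨OrderIso.refl _⟩⟩
  · rintro β γ i1 i3 - - ⟨a, ha, ⟨f⟩⟩ ⟨b, hb, ⟨g⟩⟩
    let e := f.trans ((hx.orderIsoSubtypeNeOfIsMax ha hb).trans g.symm)
    exact ⟨e.toEquiv, fun x y => e.le_iff_le.symm⟩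
end

section
/- Every covariant causet has exactly two covariant offspring: if x has shell sequence (s_0,...,s_m), its covariant offspring are the c-causets with shell sequences (s_0,...,s_m + 1) and (s_0,...,s_m, 1). -/
/-- `β` is an offspring of `α`: `β` is obtained from `α` by adjoining a single
maximal element. -/
def IsOffspring (α β : Type) [PartialOrder α] [PartialOrder β] : Prop :=
  ∃ b : β, IsMax b ∧ Nonempty (α ≃o {c : β // c ≠ b})

/-- The largest height occurring in a finite poset. -/
noncomputable def maxHeight (α : Type) [PartialOrder α] [Fintype α] : ℕ :=
  Finset.univ.sup fun a : α => (Order.height a).toNat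

/-- The shell sequence of a finite poset: the list of cardinalities of the
shells `S_j = {a : h(a) = j}`, `j = 0, …, maxHeight`. -/
noncomputable def shellSeq (α : Type) [PartialOrder α] [Fintype α] : List ℕ :=
  (List.range (maxHeight α + 1)).map fun j =>
    Nat.card {a : α // Order.height a = (j : ℕ∞)}

/-- The shell sequence with its last component incremented (the 0-offspring). -/
def off0 (s : List ℕ) : List ℕ := s.dropLast ++ [s.getLast! + 1]

/-- The shell sequence with a new final component `1` (the 1-offspring). -/
def off1 (s : List ℕ) : List ℕ := s ++ [1]

/-! If `β` is `α` with one maximal element `b` adjoined, nothing below an old element is new, so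
old elements keep their heights and the shell sequence of `β` is that of `α` with `1` added at
position `h(b)`. Always `h(b) ≤ m + 1`, where `m` is the top height of `α`; if `β` is covariant
then `h(b) ≥ m`, since otherwise an element of height `m` would be incomparable with `b`.
Conversely, a new element placed above exactly the elements of height `< t` has height `t`, and
for `t = m` and `t = m + 1` this gives the two covariant offspring. -/

open Order

section Height

variable {α : Type} [PartialOrder α]

lemma height_ne_top_of_fintype [Fintype α] (a : α) : height a ≠ ⊤ := fun h => by
  obtain ⟨p, -, hlen⟩ := height_eq_top_iff.mp h (Fintype.card α)
  exact p.length_lt_card.ne hlen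

lemma height_le_maxHeight [Fintype α] (a : α) : height a ≤ maxHeight α := by
  rw [← ENat.natCast_toNat (height_ne_top_of_fintype a)]
  exact_mod_cast Finset.le_sup (f := fun a : α => (height a).toNat) (Finset.mem_univ a)

lemma exists_height_eq_maxHeight [Fintype α] [Nonempty α] : ∃ a : α, height a = maxHeight α := by
  obtain ⟨a, -, ha⟩ :=
    Finset.exists_mem_eq_sup Finset.univ Finset.univ_nonempty fun a : α => (height a).toNat
  exact ⟨a, by rw [maxHeight, ha, ENat.natCast_toNat (height_ne_top_of_fintype a)]⟩

lemma exists_height_eq_of_le_maxHeight [Fintype α] [Nonempty α] {j : ℕ} (hj : j ≤ maxHeight α) :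
    ∃ a : α, height a = j := by
  obtain ⟨a, ha⟩ := exists_height_eq_maxHeight (α := α)
  rcases hj.eq_or_lt with rfl | hlt
  · exact ⟨a, ha⟩
  · obtain ⟨y, -, hy⟩ := (coe_lt_height_iff (ha ▸ ENat.natCast_lt_top _)).mp
      (ha ▸ (Nat.cast_lt.mpr hlt : (j : ℕ∞) < maxHeight α))
    exact ⟨y, hy⟩

lemma maxHeight_eq_of_isGreatest [Fintype α] {n : ℕ}
    (h : IsGreatest (Set.range (height : α → ℕ∞)) n) : maxHeight α = n := by
  obtain ⟨⟨b, hb⟩, hle⟩ := h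
  refine le_antisymm (Finset.sup_le fun a _ => ENat.toNat_le_of_le_natCast (hle ⟨a, rfl⟩)) ?_
  simpa [maxHeight, hb] using Finset.le_sup (f := fun a : α => (height a).toNat) (Finset.mem_univ b)

lemma card_height_eq_of_maxHeight_lt [Fintype α] {j : ℕ} (hj : maxHeight α < j) :
    Nat.card {a : α // height a = j} = 0 :=
  Nat.card_eq_zero.mpr <| Or.inl ⟨fun ⟨a, ha⟩ => by
    have := ha ▸ height_le_maxHeight a
    exact absurd (Nat.cast_le.mp this) hj.not_ge⟩

-- In `shellSeq` the ascription `(j : ℕ∞)` makes `j : ℕ∞`, so the list `List.range _` is coerced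
-- to `List ℕ∞` by a monadic lift; this unfolds it.
lemma shellSeq_eq_map_range (α : Type) [PartialOrder α] [Fintype α] :
    shellSeq α =
      (List.range (maxHeight α + 1)).map fun j : ℕ => Nat.card {a : α // height a = j} := by
  simp [shellSeq, List.map_eq_flatMap, List.flatMap_assoc]

end Height

section Offspring

variable {α β : Type} [PartialOrder α] [PartialOrder β] {b : β}

lemma height_val_of_isMax (hb : IsMax b) (c : {c : β // c ≠ b}) : height (c : β) = height c :=
  (height_eq_of_strictMono _ (Subtype.strictMono_coe _)
    (fun _ y hy => ⟨⟨y, fun h => hb.not_lt (h ▸ hy)⟩, hy, rfl⟩) c).symm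

lemma height_offspring_apply (hb : IsMax b) (e : α ≃o {c : β // c ≠ b}) (a : α) :
    height (e a : β) = height a := by
  rw [height_val_of_isMax hb, height_orderIso]

lemma height_le_maxHeight_of_ne [Fintype α] (hb : IsMax b) (e : α ≃o {c : β // c ≠ b}) {c : β}
    (hc : c ≠ b) : height c ≤ maxHeight α := by
  calc height c = height (e.symm ⟨c, hc⟩) := by
        rw [← height_offspring_apply hb e, e.apply_symm_apply]
    _ ≤ maxHeight α := height_le_maxHeight _

lemma card_height_eq_offspring [Fintype α] [Fintype β] (hb : IsMax b)
    (e : α ≃o {c : β // c ≠ b}) (j : ℕ∞) :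
    Nat.card {c : β // height c = j} =
      Nat.card {a : α // height a = j} + if height b = j then 1 else 0 := by
  classical
  let f : α ↪ β := e.toEquiv.toEmbedding.trans (Function.Embedding.subtype _)
  have hf : ∀ a, height (f a) = height a := height_offspring_apply hb e
  have hb_notMem (s : Finset α) : b ∉ s.map f := by simpa [f] using fun a _ => (e a).2
  have huniv : (Finset.univ : Finset β) = insert b (Finset.univ.map f) := by
    ext c
    by_cases hc : c = b
    · simp [hc]
    · simpa [hc, f] using ⟨e.symm ⟨c, hc⟩, by simp⟩
  simp only [Nat.card_eq_fintype_card, Fintype.card_subtype, huniv, Finset.filter_insert,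
    Finset.filter_map, Function.comp_def, hf]
  split_ifs
  · rw [Finset.card_insert_of_notMem (hb_notMem _), Finset.card_map]
  · rw [Finset.card_map, add_zero]

lemma shellSeq_offspring [Fintype α] [Fintype β] (hb : IsMax b) (e : α ≃o {c : β // c ≠ b})
    {t : ℕ} (hbt : height b = t) (ht : maxHeight α ≤ t) :
    shellSeq β = (List.range (t + 1)).map
      fun j : ℕ => Nat.card {a : α // height a = j} + if t = j then 1 else 0 := by
  have hmax : maxHeight β = t := by
    refine maxHeight_eq_of_isGreatest ⟨⟨b, hbt⟩, ?_⟩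
    rintro _ ⟨c, rfl⟩
    by_cases hc : c = b
    · exact (hc ▸ hbt).le
    · exact (height_le_maxHeight_of_ne hb e hc).trans (Nat.cast_le.mpr ht)
  rw [shellSeq_eq_map_range, hmax]
  refine List.map_congr_left fun j _ => ?_
  simp only [card_height_eq_offspring hb e, hbt, Nat.cast_inj]

lemma shellSeq_offspring_eq_off0 [Fintype α] [Fintype β] (hb : IsMax b)
    (e : α ≃o {c : β // c ≠ b}) (hbt : height b = maxHeight α) :
    shellSeq β = off0 (shellSeq α) := by
  rw [shellSeq_offspring hb e hbt le_rfl, shellSeq_eq_map_range, off0, List.range_succ,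
    List.map_append, List.map_append, List.map_singleton, List.map_singleton, List.dropLast_concat,
    List.getLast!_of_getLast? List.getLast?_concat, if_pos rfl]
  congr 1
  refine List.map_congr_left fun j hj => ?_
  rw [if_neg (List.mem_range.mp hj).ne', add_zero]

lemma shellSeq_offspring_eq_off1 [Fintype α] [Fintype β] (hb : IsMax b)
    (e : α ≃o {c : β // c ≠ b}) (hbt : height b = ↑(maxHeight α + 1)) :
    shellSeq β = off1 (shellSeq α) := by
  rw [shellSeq_offspring hb e hbt (Nat.le_succ _), shellSeq_eq_map_range, off1, List.range_succ,
    List.map_append, List.map_singleton, if_pos rfl,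
    card_height_eq_of_maxHeight_lt (Nat.lt_succ_self _)]
  congr 1
  refine List.map_congr_left fun j hj => ?_
  rw [if_neg (List.mem_range.mp hj).ne', add_zero]

lemma height_isMax_offspring [Fintype α] [Nonempty α] [Fintype β] (hβ : CCauset β)
    (hb : IsMax b) (e : α ≃o {c : β // c ≠ b}) :
    height b = maxHeight α ∨ height b = ↑(maxHeight α + 1) := by
  have hle : height b ≤ ↑(maxHeight α + 1) := height_le_coe_iff.mpr fun c hc =>
    (height_le_maxHeight_of_ne hb e hc.ne).trans_lt (Nat.cast_lt.mpr (Nat.lt_succ_self _))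
  have hge : (maxHeight α : ℕ∞) ≤ height b := by
    obtain ⟨a, ha⟩ := exists_height_eq_maxHeight (α := α)
    rw [← ha, ← height_offspring_apply hb e]
    by_contra! hlt
    rcases hβ _ _ hlt.ne' with h | h
    · exact (height_mono h.le).not_gt hlt
    · exact hb.not_lt h
  obtain ⟨t, ht⟩ := ENat.ne_top_iff_exists.mp (height_ne_top_of_fintype b)
  rw [← ht] at hle hge ⊢
  norm_cast at hle hge ⊢
  omega

end Offspring

/-- `α` with a new maximal element `apex` placed above exactly the elements of height `< t`. -/
def AdjoinMax (α : Type) (_t : ℕ) : Type := Option α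

namespace AdjoinMax

variable {α : Type} [PartialOrder α] {t : ℕ}

abbrev of (a : α) : AdjoinMax α t := some a

abbrev apex : AdjoinMax α t := none

instance : LE (AdjoinMax α t) where
  le
    | some a, some a' => a ≤ a'
    | some a, none => height a < t
    | none, some _ => False
    | none, none => True

instance : PartialOrder (AdjoinMax α t) where
  le_refl
    | some a => le_refl a
    | none => trivial
  le_trans
    | some _, some _, some _, h, h' => le_trans (α := α) h h'
    | some _, some _, none, h, h' => lt_of_le_of_lt (height_mono h) h'
    | some _, none, none, h, _ => h
    | none, none, none, _, _ => trivial
    | some _, none, some _, _, h' => h'.elim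
    | none, some _, _, h, _ => h.elim
    | none, none, some _, _, h' => h'.elim
  le_antisymm
    | some _, some _, h, h' => congrArg some (le_antisymm h h')
    | none, none, _, _ => rfl
    | some _, none, _, h' => h'.elim
    | none, some _, h, _ => h.elim

instance [Fintype α] : Fintype (AdjoinMax α t) := inferInstanceAs (Fintype (Option α))

lemma of_lt_of {a a' : α} : (of a : AdjoinMax α t) < of a' ↔ a < a' := by
  rw [lt_iff_le_not_ge, lt_iff_le_not_ge (α := α)]
  rfl

lemma of_lt_apex {a : α} : (of a : AdjoinMax α t) < apex ↔ height a < t :=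
  ⟨LT.lt.le, fun h => ⟨h, id⟩⟩

lemma isMax_apex : IsMax (apex : AdjoinMax α t) := by
  rintro (_ | a) h
  · exact le_rfl
  · exact h.elim

def ofIso : α ≃o {c : AdjoinMax α t // c ≠ apex} where
  toFun a := ⟨of a, Option.some_ne_none a⟩
  invFun c := c.1.get (Option.ne_none_iff_isSome.mp c.2)
  left_inv _ := rfl
  right_inv _ := Subtype.ext (Option.some_get _)
  map_rel_iff' := Iff.rfl

lemma isOffspring : IsOffspring α (AdjoinMax α t) := ⟨apex, isMax_apex, ⟨ofIso⟩⟩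

lemma height_of (a : α) : height (of a : AdjoinMax α t) = height a :=
  height_offspring_apply isMax_apex ofIso a

lemma height_apex [Fintype α] [Nonempty α] (ht : t ≤ maxHeight α + 1) :
    height (apex : AdjoinMax α t) = t := by
  refine le_antisymm (height_le_coe_iff.mpr ?_) ?_
  · rintro (_ | a) h
    · exact absurd h (lt_irrefl _)
    · rwa [height_of, ← of_lt_apex]
  · obtain _ | s := t
    · exact bot_le
    · obtain ⟨a, ha⟩ := exists_height_eq_of_le_maxHeight (α := α) (Nat.le_of_succ_le_succ ht)
      have := height_add_one_le (of_lt_apex.mpr (by rw [ha]; exact_mod_cast Nat.lt_succ_self s) :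
        (of a : AdjoinMax α (s + 1)) < apex)
      rwa [height_of, ha] at this

lemma cCauset [Fintype α] [Nonempty α] (hα : CCauset α) (ht₁ : maxHeight α ≤ t)
    (ht₂ : t ≤ maxHeight α + 1) : CCauset (AdjoinMax α t) := by
  have of_lt_apex_of_ne (a : α) (h : height a ≠ t) : (of a : AdjoinMax α t) < apex :=
    of_lt_apex.mpr ((height_le_maxHeight a).trans (Nat.cast_le.mpr ht₁) |>.lt_of_ne h)
  rintro (_ | a) (_ | a') h
  · exact absurd rfl h
  · rw [height_of, height_apex ht₂] at h
    exact Or.inr (of_lt_apex_of_ne a' h.symm)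
  · rw [height_of, height_apex ht₂] at h
    exact Or.inl (of_lt_apex_of_ne a h)
  · rw [height_of, height_of] at h
    exact (hα a a' h).imp of_lt_of.mpr of_lt_of.mpr

end AdjoinMax

/-- Every covariant causet has exactly two covariant offspring, namely those
with shell sequences `(s_0,…,s_m + 1)` and `(s_0,…,s_m,1)`. -/
theorem two_covariant_offspring (α : Type) [PartialOrder α] [Fintype α] [Nonempty α]
    (hx : CCauset α) :
    (∀ (β : Type) (i1 : PartialOrder β) (i2 : Fintype β),
        @IsOffspring α β _ i1 → @CCauset β i1 →
          @shellSeq β i1 i2 = off0 (shellSeq α) ∨ @shellSeq β i1 i2 = off1 (shellSeq α)) ∧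
    (∃ (β : Type) (i1 : PartialOrder β) (i2 : Fintype β),
        @IsOffspring α β _ i1 ∧ @CCauset β i1 ∧ @shellSeq β i1 i2 = off0 (shellSeq α)) ∧
    (∃ (β : Type) (i1 : PartialOrder β) (i2 : Fintype β),
        @IsOffspring α β _ i1 ∧ @CCauset β i1 ∧ @shellSeq β i1 i2 = off1 (shellSeq α)) := by
  refine ⟨fun β _ _ ⟨b, hb, ⟨e⟩⟩ hβ => ?_, ?_, ?_⟩
  · exact (height_isMax_offspring hβ hb e).imp (shellSeq_offspring_eq_off0 hb e)
      (shellSeq_offspring_eq_off1 hb e)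
  · exact ⟨AdjoinMax α (maxHeight α), _, _, AdjoinMax.isOffspring,
      AdjoinMax.cCauset hx le_rfl (Nat.le_succ _),
      shellSeq_offspring_eq_off0 AdjoinMax.isMax_apex AdjoinMax.ofIso
        (AdjoinMax.height_apex (Nat.le_succ _))⟩
  · exact ⟨AdjoinMax α (maxHeight α + 1), _, _, AdjoinMax.isOffspring,
      AdjoinMax.cCauset hx (Nat.le_succ _) le_rfl,
      shellSeq_offspring_eq_off1 AdjoinMax.isMax_apex AdjoinMax.ofIso
        (AdjoinMax.height_apex le_rfl)⟩
end

section
/- Concatenating two geodesics at a common endpoint need not yield a geodesic: there exists a covariant causet and vertices a < c < b such that some path from a to c and some path from c to b are geodesics, but their concatenation is not a geodesic from a to b. -/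
/-- In a covariant causet encoded by its shell function `sh` (with canonical
shell-by-shell labels `Fin n`), `j` is a child of `i` iff `j` lies in the shell
just after that of `i`. -/
def parentRel {n : ℕ} (sh : Fin n → ℕ) (i j : Fin n) : Prop :=
  sh j = sh i + 1

/-- A path from `a` to `b`: a parent-child chain starting at `a`, ending at `b`. -/
def IsPathSh {n : ℕ} (sh : Fin n → ℕ) (a b : Fin n) (p : List (Fin n)) : Prop :=
  p.Chain' (parentRel sh) ∧ p.head? = some a ∧ p.getLast? = some b

/-- Path length `(Σ (i_j − i_{j−1})²)^{1/2}` computed from the labels. -/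
noncomputable def lenSh {n : ℕ} (p : List (Fin n)) : ℝ :=
  Real.sqrt (((p.zip p.tail).map fun q =>
    (((q.2 : ℕ) : ℝ) - ((q.1 : ℕ) : ℝ)) ^ 2).sum)

/-- A geodesic: a path of minimal length between its endpoints. -/
def IsGeoSh {n : ℕ} (sh : Fin n → ℕ) (a b : Fin n) (p : List (Fin n)) : Prop :=
  IsPathSh sh a b p ∧ ∀ q : List (Fin n), IsPathSh sh a b q → lenSh p ≤ lenSh q

/-! Label the causet with shell sequence (1,2,3,4,5,4,3,2,1) by `0, …, 24`, shell by shell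
(the paper's labels minus one).
A path climbs one shell per step, so a path between shells `k` apart has exactly `k + 1`
vertices, and comparing lengths means comparing integer sums of squared label gaps.
The path `0–2–5` (squared length `4 + 9 = 13`, against `1 + 16` for `0–1–5`) and the single
edge `5–6` are geodesics, yet their concatenation `0–2–5–6` (squared length `14`) loses to
`0–2–4–6` (squared length `12`). -/

instance {n : ℕ} (sh : Fin n → ℕ) : DecidableRel (parentRel sh) :=
  fun i j => inferInstanceAs (Decidable (sh j = sh i + 1))

section Paths

variable {n : ℕ} {sh : Fin n → ℕ} {a b : Fin n}

theorem isPathSh_iff {p : List (Fin n)} :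
    IsPathSh sh a b p ↔ p.IsChain (parentRel sh) ∧ p.head? = some a ∧ p.getLast? = some b :=
  Iff.rfl

instance : DecidablePred (IsPathSh sh a b) :=
  fun _ => decidable_of_iff' _ isPathSh_iff

theorem IsPathSh.shell_add_length {p : List (Fin n)} (h : IsPathSh sh a b p) :
    sh a + p.length = sh b + 1 := by
  rw [isPathSh_iff] at h
  obtain ⟨hc, hh, hl⟩ := h
  induction p generalizing a with
  | nil => simp at hh
  | cons x t ih =>
    obtain rfl : x = a := by simpa using hh
    cases t with
    | nil =>
      obtain rfl : x = b := by simpa using hl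
      simp
    | cons y s =>
      rw [List.isChain_cons_cons] at hc
      have hy : sh y = sh x + 1 := hc.1
      have htail := ih hc.2 rfl (by simpa [List.getLast?_cons_cons] using hl)
      simp only [List.length_cons] at htail ⊢
      omega

theorem isPathSh_pair_iff {x y : Fin n} :
    IsPathSh sh a b [x, y] ↔ x = a ∧ y = b ∧ parentRel sh x y := by
  simp [isPathSh_iff]
  tauto

theorem isPathSh_triple_iff {x y z : Fin n} :
    IsPathSh sh a b [x, y, z] ↔ x = a ∧ z = b ∧ parentRel sh x y ∧ parentRel sh y z := by
  simp [isPathSh_iff]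
  tauto

theorem IsPathSh.eq_pair {p : List (Fin n)} (h : IsPathSh sh a b p) (hab : sh b = sh a + 1) :
    p = [a, b] := by
  obtain ⟨x, y, rfl⟩ := (List.length_eq_two (l := p)).mp (by have := h.shell_add_length; omega)
  obtain ⟨rfl, rfl, -⟩ := isPathSh_pair_iff.mp h
  rfl

theorem IsPathSh.eq_triple {p : List (Fin n)} (h : IsPathSh sh a b p) (hab : sh b = sh a + 2) :
    ∃ x, p = [a, x, b] := by
  obtain ⟨x, y, z, rfl⟩ := (List.length_eq_three (l := p)).mp (by have := h.shell_add_length; omega)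
  obtain ⟨rfl, rfl, -⟩ := isPathSh_triple_iff.mp h
  exact ⟨y, rfl⟩

end Paths

section Length

variable {n : ℕ}

def sqLenSh (p : List (Fin n)) : ℤ :=
  ((p.zip p.tail).map fun q => (((q.2 : ℕ) : ℤ) - ((q.1 : ℕ) : ℤ)) ^ 2).sum

theorem sqLenSh_nonneg (p : List (Fin n)) : 0 ≤ sqLenSh p :=
  List.sum_nonneg fun _ hx => by
    obtain ⟨q, -, rfl⟩ := List.mem_map.mp hx
    positivity

theorem lenSh_eq_sqrt_sqLenSh (p : List (Fin n)) : lenSh p = √(sqLenSh p : ℝ) := by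
  simp [lenSh, sqLenSh, Function.comp_def]

theorem lenSh_le_lenSh_iff {p q : List (Fin n)} : lenSh p ≤ lenSh q ↔ sqLenSh p ≤ sqLenSh q := by
  rw [lenSh_eq_sqrt_sqLenSh, lenSh_eq_sqrt_sqLenSh,
    Real.sqrt_le_sqrt_iff (mod_cast sqLenSh_nonneg q), Int.cast_le]

end Length

section Geodesics

variable {n : ℕ} {sh : Fin n → ℕ} {a b : Fin n}

theorem isGeoSh_pair (hab : parentRel sh a b) : IsGeoSh sh a b [a, b] :=
  ⟨isPathSh_pair_iff.mpr ⟨rfl, rfl, hab⟩, fun _ hq => by rw [hq.eq_pair hab]⟩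

theorem isGeoSh_triple {x : Fin n} (hax : parentRel sh a x) (hxb : parentRel sh x b)
    (hmin : ∀ y, parentRel sh a y → parentRel sh y b → sqLenSh [a, x, b] ≤ sqLenSh [a, y, b]) :
    IsGeoSh sh a b [a, x, b] := by
  refine ⟨isPathSh_triple_iff.mpr ⟨rfl, rfl, hax, hxb⟩, fun q hq => ?_⟩
  obtain ⟨y, rfl⟩ := hq.eq_triple (by unfold parentRel at hax hxb; omega)
  obtain ⟨-, -, hay, hyb⟩ := isPathSh_triple_iff.mp hq
  exact lenSh_le_lenSh_iff.mpr (hmin y hay hyb)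

theorem not_isGeoSh_of_sqLenSh_lt {p q : List (Fin n)} (hq : IsPathSh sh a b q)
    (hlt : sqLenSh q < sqLenSh p) : ¬ IsGeoSh sh a b p :=
  fun hp => (lenSh_le_lenSh_iff.mp (hp.2 q hq)).not_gt hlt

end Geodesics

def diamondShell : Fin 25 → ℕ :=
  ![0, 1, 1, 2, 2, 2, 3, 3, 3, 3, 4, 4, 4, 4, 4, 5, 5, 5, 5, 6, 6, 6, 7, 7, 8]

theorem diamondShell_monotone : Monotone diamondShell :=
  Fin.monotone_iff_le_succ.mpr (by decide)

theorem exists_diamondShell_eq_of_le (i : Fin 25) (s : ℕ) (hs : s ≤ diamondShell i) :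
    ∃ j, diamondShell j = s := by
  have hmax : ∀ i, diamondShell i ≤ 8 := by decide
  have hall : ∀ s ≤ 8, ∃ j, diamondShell j = s := by decide
  exact hall s (hs.trans (hmax i))

/-- Concatenating two geodesics at a common endpoint need not yield a geodesic:
there is a covariant causet (given by a shell function on canonical labels) and
vertices `a < c < b` with geodesics `p : a → c` and `q : c → b` whose
concatenation is not a geodesic from `a` to `b`. -/
theorem geodesic_concat_not_geodesic :
    ∃ (n : ℕ) (sh : Fin n → ℕ),
      (∀ i j : Fin n, i ≤ j → sh i ≤ sh j) ∧
      (∀ i j : Fin n, sh i < sh j → i < j) ∧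
      (∀ (i : Fin n) (s : ℕ), s ≤ sh i → ∃ j : Fin n, sh j = s) ∧
      ∃ (a c b : Fin n) (p q : List (Fin n)),
        sh a < sh c ∧ sh c < sh b ∧
        IsGeoSh sh a c p ∧ IsGeoSh sh c b q ∧
        ¬ IsGeoSh sh a b (p ++ q.tail) := by
  refine ⟨25, diamondShell, fun _ _ => (diamondShell_monotone ·),
    fun _ _ => diamondShell_monotone.reflect_lt, exists_diamondShell_eq_of_le,
    0, 5, 6, [0, 2, 5], [5, 6], by decide, by decide, ?_, isGeoSh_pair (by decide), ?_⟩
  · exact isGeoSh_triple (by decide) (by decide) (by decide)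
  · exact not_isGeoSh_of_sqLenSh_lt (q := [0, 2, 4, 6]) (by decide) (by decide)
end

section
/- With coupling constants c^k as in the amplitude process with angle θ = π/16, the edges e^1 and e^2 do not interfere (|ã(e^1)+ã(e^2)|^2 = |ã(e^1)|^2 + |ã(e^2)|^2), while e^1 and e^3 interfere constructively: |ã(e^1)+ã(e^3)|^2 = cos^2(π/16)/(1 − sin(π/8)) > |ã(e^1)|^2 + |ã(e^3)|^2 = 1/(2(1 − sin(π/8))). -/
/-!
Since `ã(e²) = i ã(e¹)` is `ã(e¹)` turned by a right angle, the two amplitudes are orthogonal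
and their squared norms add. In contrast `ã(e¹) + ã(e³) = 2 cos(π/16) / z` with
`|z|² = 4 (1 - sin(π/8))`, so constructive interference reduces to `cos²(π/16) > 1/2`,
i.e. to `cos(π/8) > 0`.
-/

open Real

namespace Complex

lemma norm_add_I_mul_sq (a : ℂ) : ‖a + I * a‖ ^ 2 = ‖a‖ ^ 2 + ‖I * a‖ ^ 2 := by
  have h : ‖1 + I‖ ^ 2 = 2 := by
    simpa [Complex.sq_norm, one_add_one_eq_two] using normSq_add_mul_I 1 1
  rw [show a + I * a = (1 + I) * a by ring, norm_mul, norm_mul, norm_I, mul_pow, h]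
  ring

lemma norm_exp_neg_ofReal_mul_I (x : ℝ) : ‖exp (-x * I)‖ = 1 := by
  rw [← ofReal_neg, norm_exp_ofReal_mul_I]

lemma norm_exp_ofReal_mul_I_add_exp_neg_sq (x : ℝ) :
    ‖exp (x * I) + exp (-x * I)‖ ^ 2 = 4 * Real.cos x ^ 2 := by
  rw [← two_cos, ← ofReal_cos, ← ofReal_ofNat, ← ofReal_mul, norm_real, norm_eq_abs, sq_abs]
  ring

end Complex

lemma sq_two_mul_sqrt_two_mul_sin_pi_div_four_sub (θ : ℝ) :
    (2 * √2 * sin (π / 4 - θ)) ^ 2 = 4 * (1 - sin (2 * θ)) := by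
  rw [mul_pow, mul_pow, sq_sqrt zero_le_two, sin_sq_eq_half_sub, mul_sub,
    ← cos_pi_div_two_sub]
  ring_nf

lemma half_lt_cos_sq {θ : ℝ} (h₁ : -(π / 4) < θ) (h₂ : θ < π / 4) : 1 / 2 < cos θ ^ 2 := by
  have : 0 < cos (2 * θ) := cos_pos_of_mem_Ioo ⟨by linarith, by linarith⟩
  rw [cos_sq]
  linarith

/-- For the amplitude process with `θ = π/16`: the edges `e¹`, `e²` do not
interfere, while `e¹`, `e³` interfere constructively with
`|ã(e¹)+ã(e³)|² = cos²(π/16)/(1 − sin(π/8)) > |ã(e¹)|² + |ã(e³)|²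
= 1/(2(1 − sin(π/8)))`. -/
theorem interference_at_theta_pi16 :
    let z : ℂ := ((2 * Real.sqrt 2 * Real.sin (π / 4 - π / 16) : ℝ) : ℂ)
    let a1 : ℂ := Complex.exp ((π / 16 : ℝ) * Complex.I) / z
    let a2 : ℂ := Complex.I * a1
    let a3 : ℂ := Complex.exp (-(π / 16 : ℝ) * Complex.I) / z
    ‖a1 + a2‖ ^ 2 = ‖a1‖ ^ 2 + ‖a2‖ ^ 2 ∧
    ‖a1 + a3‖ ^ 2 = Real.cos (π / 16) ^ 2 / (1 - Real.sin (π / 8)) ∧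
    ‖a1‖ ^ 2 + ‖a3‖ ^ 2 = 1 / (2 * (1 - Real.sin (π / 8))) ∧
    ‖a1 + a3‖ ^ 2 > ‖a1‖ ^ 2 + ‖a3‖ ^ 2 := by
  intro z a1 a2 a3
  have hs : 0 < 1 - sin (π / 8) :=
    sub_pos.2 ((sin_lt (by positivity)).trans (by linarith [pi_le_four]))
  have hz_sq : ‖z‖ ^ 2 = 4 * (1 - sin (π / 8)) := by
    rw [Complex.norm_real, norm_eq_abs, sq_abs, sq_two_mul_sqrt_two_mul_sin_pi_div_four_sub,
      show 2 * (π / 16) = π / 8 by ring]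
  have h_joint : ‖a1 + a3‖ ^ 2 = cos (π / 16) ^ 2 / (1 - sin (π / 8)) := by
    rw [← add_div, norm_div, div_pow, Complex.norm_exp_ofReal_mul_I_add_exp_neg_sq, hz_sq]
    field_simp
  have h_separate : ‖a1‖ ^ 2 + ‖a3‖ ^ 2 = 1 / (2 * (1 - sin (π / 8))) := by
    rw [norm_div, norm_div, Complex.norm_exp_ofReal_mul_I, Complex.norm_exp_neg_ofReal_mul_I,
      div_pow, hz_sq]
    field_simp
    ring
  have hcos : 1 / 2 < cos (π / 16) ^ 2 :=
    half_lt_cos_sq (by linarith [pi_pos]) (by linarith [pi_pos])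
  refine ⟨Complex.norm_add_I_mul_sq a1, h_joint, h_separate, ?_⟩
  rw [gt_iff_lt, h_joint, h_separate, ← div_div, div_lt_div_iff_of_pos_right hs]
  exact hcos
end
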